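/- Let a, b and c be real numbers and n a nonnegative integer such that (b+n+1)_k ≠ 0, (b−a+1)_k ≠ 0 and (b−c+1)_k ≠ 0 for all 0 ≤ k ≤ n. Then Σ_{k=0}^{n} [(−n)_k (a)_k (b)_k (c)_k / ((b+n+1)_k (b−a+1)_k (b−c+1)_k k!)] (b+2k) = (b)_{n+1} (b−a−c+1)_n / ((b−a+1)_n (b−c+1)_n). -/

import Mathlib

/-!
Clearing the denominators `(b+n+1)_n (b-a+1)_n (b-c+1)_n n!` turns the identity into a
polynomial identity `∑_k T(n,k) = (b)_{n+1} (b-a-c+1)_n (b+n+1)_n n!`, which holds in every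
commutative ring. Both sides satisfy the recurrence
`S(n+1) = (b-a-c+1+n) (n+1) (b+2n+1) (b+2n+2) S(n)`: for the right side this is a shift of
Pochhammer symbols, for the left side it follows by creative telescoping (Zeilberger), since
`T(n+1,k) - (b-a-c+1+n)(n+1)(b+2n+1)(b+2n+2) T(n,k) = G(n,k+1) - G(n,k)` for an explicit
certificate `G` vanishing at `k = 0` and `k = n+2`.
-/

/-- The Pochhammer symbol (rising factorial) `(a)_k = a (a+1) ⋯ (a+k-1)`. -/
noncomputable def poch (a : ℝ) (k : ℕ) : ℝ := (ascPochhammer ℝ k).eval a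

open Finset

section Pochhammer

variable {R : Type*} [CommSemiring R]

theorem ascPochhammer_succ_eval_left (x : R) (k : ℕ) :
    (ascPochhammer R (k + 1)).eval x = x * (ascPochhammer R k).eval (x + 1) := by
  simp [ascPochhammer_succ_left, Polynomial.eval_comp]

theorem ascPochhammer_eval_add (x : R) (m j : ℕ) :
    (ascPochhammer R (m + j)).eval x =
      (ascPochhammer R m).eval x * (ascPochhammer R j).eval (x + m) := by
  rw [← ascPochhammer_mul, Polynomial.eval_mul, Polynomial.eval_comp]
  simp

end Pochhammer

section WellPoised

variable {R : Type*} [CommRing R]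

local notation:max "⟦" x "⟧_" k:max => Polynomial.eval x (ascPochhammer _ k)

/-- The `k`-th summand multiplied by `(b+n+1)_n (b-a+1)_n (b-c+1)_n n!`. -/
noncomputable def wellPoisedTerm (a b c : R) (n k : ℕ) : R :=
  ⟦-(n : R)⟧_k * ⟦a⟧_k * ⟦b⟧_k * ⟦c⟧_k * (b + 2 * k) *
    (⟦b + n + 1 + k⟧_(n - k) * ⟦b - a + 1 + k⟧_(n - k) * ⟦b - c + 1 + k⟧_(n - k) *
      ⟦(k : R) + 1⟧_(n - k))

noncomputable def wellPoisedCertificate (a b c : R) (n k : ℕ) : R :=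
  -(⟦-((n : R) + 1)⟧_k * ⟦a⟧_k * ⟦b⟧_k * ⟦c⟧_k) *
    (⟦b + n + 1 + k⟧_(n + 2 - k) * ⟦b - a + k⟧_(n + 1 - k) * ⟦b - c + k⟧_(n + 1 - k) *
      ⟦(k : R)⟧_(n + 1 - k))

theorem wellPoisedTerm_eq_zero_of_lt (a b c : R) {n k : ℕ} (h : n < k) :
    wellPoisedTerm a b c n k = 0 := by
  simp [wellPoisedTerm, ascPochhammer_eval_neg_coe_nat_of_lt h]

theorem wellPoisedCertificate_zero (a b c : R) (n : ℕ) :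
    wellPoisedCertificate a b c n 0 = 0 := by
  simp [wellPoisedCertificate]

theorem wellPoisedCertificate_add_two (a b c : R) (n : ℕ) :
    wellPoisedCertificate a b c n (n + 2) = 0 := by
  have h : ⟦-((n : R) + 1)⟧_(n + 2) = 0 := by
    exact_mod_cast ascPochhammer_eval_neg_coe_nat_of_lt (Nat.lt_succ_self (n + 1))
  rw [wellPoisedCertificate, h]
  ring

theorem wellPoisedTerm_succ_sub (a b c : R) {n k : ℕ} (hk : k ≤ n + 1) :
    wellPoisedTerm a b c (n + 1) k -
        (b - a - c + 1 + n) * ((n + 1) * (b + 2 * n + 1) * (b + 2 * n + 2) *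
          wellPoisedTerm a b c n k) =
      wellPoisedCertificate a b c n (k + 1) - wellPoisedCertificate a b c n k := by
  rcases Nat.lt_or_eq_of_le hk with hk | rfl
  · obtain ⟨m, hm⟩ := Nat.exists_eq_add_of_le (Nat.le_of_lt_succ hk)
    -- the factor `(n+1)(b+2n+1)(b+2n+2)` merges `(-n)_k` and `(b+n+1+k)_(n-k)` into longer
    -- Pochhammer symbols that share their factors with those of `T(n+1,k)` and `G`
    have hshift : (n + 1) * (b + 2 * n + 1) * (b + 2 * n + 2) * wellPoisedTerm a b c n k =
        -⟦-((n : R) + 1)⟧_(k + 1) * ⟦a⟧_k * ⟦b⟧_k * ⟦c⟧_k * (b + 2 * k) *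
          (⟦b + n + 1 + k⟧_(m + 1 + 1) * ⟦b - a + 1 + k⟧_m * ⟦b - c + 1 + k⟧_m *
            ⟦(k : R) + 1⟧_m) := by
      rw [wellPoisedTerm, ascPochhammer_succ_eval_left _ k, ascPochhammer_succ_eval (m + 1),
        ascPochhammer_succ_eval m, show n - k = m by omega,
        show -((n : R) + 1) + 1 = -n by ring]
      subst hm; push_cast; ring
    rw [hshift, wellPoisedTerm, wellPoisedCertificate, wellPoisedCertificate,
      show n + 1 - k = m + 1 by omega, show n + 2 - (k + 1) = m + 1 by omega,
      show n + 1 - (k + 1) = m by omega, show n + 2 - k = m + 1 + 1 by omega,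
      ascPochhammer_succ_eval_left (b + n + 1 + k) (m + 1),
      ascPochhammer_succ_eval_left (b - a + k) m, ascPochhammer_succ_eval_left (b - c + k) m,
      ascPochhammer_succ_eval_left (k : R) m]
    simp only [ascPochhammer_succ_eval]
    subst hm; push_cast; ring_nf
  · rw [wellPoisedTerm_eq_zero_of_lt a b c (Nat.lt_succ_self n), wellPoisedCertificate_add_two,
      wellPoisedTerm, wellPoisedCertificate, Nat.sub_self, show n + 2 - (n + 1) = 1 by omega]
    simp only [ascPochhammer_zero, ascPochhammer_one, Polynomial.eval_one, Polynomial.eval_X]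
    push_cast; ring

theorem sum_range_wellPoisedTerm_succ (a b c : R) (n : ℕ) :
    ∑ k ∈ range (n + 2), wellPoisedTerm a b c (n + 1) k =
      (b - a - c + 1 + n) * (n + 1) * (b + 2 * n + 1) * (b + 2 * n + 2) *
        ∑ k ∈ range (n + 1), wellPoisedTerm a b c n k := by
  have htel := sum_range_sub (wellPoisedCertificate a b c n) (n + 2)
  rw [wellPoisedCertificate_add_two, wellPoisedCertificate_zero, sub_zero,
    ← sum_congr rfl fun k hk => wellPoisedTerm_succ_sub a b c (mem_range_succ_iff.mp hk),
    sum_sub_distrib, ← mul_sum, ← mul_sum, sum_range_succ (wellPoisedTerm a b c n),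
    wellPoisedTerm_eq_zero_of_lt a b c (Nat.lt_succ_self n), add_zero] at htel
  linear_combination htel

theorem sum_range_wellPoisedTerm (a b c : R) (n : ℕ) :
    ∑ k ∈ range (n + 1), wellPoisedTerm a b c n k =
      ⟦b⟧_(n + 1) * ⟦b - a - c + 1⟧_n * ⟦b + n + 1⟧_n * n.factorial := by
  induction n with
  | zero => simp [wellPoisedTerm]
  | succ n ih =>
    have hshift : ⟦b + n + 1⟧_n * (b + 2 * n + 1) * (b + 2 * n + 2) =
        (b + n + 1) * ⟦b + (n + 1) + 1⟧_(n + 1) := by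
      rw [← add_assoc b, ← ascPochhammer_succ_eval_left, ascPochhammer_succ_eval (n + 1),
        ascPochhammer_succ_eval n]
      push_cast; ring
    rw [sum_range_wellPoisedTerm_succ, ih, ascPochhammer_succ_eval (n + 1) b,
      ascPochhammer_succ_eval n (b - a - c + 1), Nat.factorial_succ]
    push_cast
    linear_combination (b - a - c + 1 + n) * (n + 1) * ⟦b⟧_(n + 1) * ⟦b - a - c + 1⟧_n *
      n.factorial * hshift

theorem wellPoisedTerm_mul (a b c : R) {n k : ℕ} (hk : k ≤ n) :
    wellPoisedTerm a b c n k *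
        (⟦b + n + 1⟧_k * ⟦b - a + 1⟧_k * ⟦b - c + 1⟧_k * k.factorial) =
      ⟦-(n : R)⟧_k * ⟦a⟧_k * ⟦b⟧_k * ⟦c⟧_k * (b + 2 * k) *
        (⟦b + n + 1⟧_n * ⟦b - a + 1⟧_n * ⟦b - c + 1⟧_n * n.factorial) := by
  obtain ⟨m, rfl⟩ := Nat.exists_eq_add_of_le hk
  rw [wellPoisedTerm, Nat.add_sub_cancel_left, ascPochhammer_eval_add _ k m,
    ascPochhammer_eval_add (b - a + 1) k m, ascPochhammer_eval_add (b - c + 1) k m,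
    ← factorial_mul_ascPochhammer]
  ring

end WellPoised

theorem well_poised_sum (a b c : ℝ) (n : ℕ)
    (h1 : ∀ k ≤ n, poch (b + n + 1) k ≠ 0)
    (h2 : ∀ k ≤ n, poch (b - a + 1) k ≠ 0)
    (h3 : ∀ k ≤ n, poch (b - c + 1) k ≠ 0) :
    ∑ k ∈ Finset.range (n + 1),
      poch (-(n : ℝ)) k * poch a k * poch b k * poch c k /
        (poch (b + n + 1) k * poch (b - a + 1) k * poch (b - c + 1) k * Nat.factorial k) *
        (b + 2 * k)
    = poch b (n + 1) * poch (b - a - c + 1) n / (poch (b - a + 1) n * poch (b - c + 1) n) := by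
  have hden : ∀ k ≤ n,
      poch (b + n + 1) k * poch (b - a + 1) k * poch (b - c + 1) k * k.factorial ≠ 0 :=
    fun k hk => by have := h1 k hk; have := h2 k hk; have := h3 k hk; positivity
  have hterm : ∀ k ∈ range (n + 1),
      poch (-(n : ℝ)) k * poch a k * poch b k * poch c k /
          (poch (b + n + 1) k * poch (b - a + 1) k * poch (b - c + 1) k * k.factorial) *
          (b + 2 * k) =
        wellPoisedTerm a b c n k /
          (poch (b + n + 1) n * poch (b - a + 1) n * poch (b - c + 1) n * n.factorial) := by
    intro k hk
    rw [mem_range_succ_iff] at hk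
    rw [div_mul_eq_mul_div, div_eq_div_iff (hden k hk) (hden n le_rfl)]
    exact (wellPoisedTerm_mul a b c hk).symm
  rw [sum_congr rfl hterm, ← sum_div, sum_range_wellPoisedTerm]
  have := h1 n le_rfl; have := h2 n le_rfl; have := h3 n le_rfl
  field_simp
  simp only [poch]
  ring
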